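/- The kernel of the linear map R_H : ℂ[K] → ℂ[H*] coincides with the ℂ-linear span of the basis elements e_g with g ∈ K \ H. -/

import Mathlib

/-!
For `g ∉ H` pick a character `β` trivial on `H` with `β g ≠ 1`: reindexing the sum defining
`R_H(e_g)` by `α ↦ β α` shows `β g • R_H(e_g) = R_H(e_g)`, so `R_H(e_g) = 0`. Conversely, for
`h ∈ H`, composing `R_H` with the algebra map `e_χ ↦ χ(h)⁻¹` of `ℂ[H*]` gives `|K*|` times the
coefficient at `h`, by orthogonality of the characters of `K`; hence an element of the kernel has
no coefficients on `H`.
-/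

/-- The character group `K* = Hom(K, ℂˣ)` of a finite abelian group is finite. -/
instance charFinite (K : Type*) [CommGroup K] [Finite K] : Finite (K →* ℂˣ) := by
  have : Fintype K := .ofFinite _
  let S := rootsOfUnity (Fintype.card K) ℂ
  have fF : Finite (K →* S) := .of_injective _ DFunLike.coe_injective
  refine Finite.of_surjective (fun f : K →* S ↦ (Subgroup.subtype _).comp f) fun f ↦ ?_
  have H : ∀ a, f a ∈ S := by
    intro a
    simp only [mem_rootsOfUnity, ← map_pow, pow_card_eq_one, map_one, S]
  exact ⟨MonoidHom.codRestrict f S H, MonoidHom.ext fun _ ↦ rfl⟩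

noncomputable instance charFintype (K : Type*) [CommGroup K] [Finite K] : Fintype (K →* ℂˣ) :=
  Fintype.ofFinite _

/-- `ê_α = ∑_{g ∈ K} α(g)⁻¹ e_g` in the group algebra `ℂ[K]`. -/
noncomputable def ehat {K : Type*} [CommGroup K] [Fintype K] (α : K →* ℂˣ) :
    MonoidAlgebra ℂ K :=
  ∑ g : K, MonoidAlgebra.single g ((((α g)⁻¹ : ℂˣ) : ℂ))

/-- `ψ_β : ℂ[K] → ℂ[K]`, the linear map determined by `ψ_β(e_g) = β(g) e_g`. -/
noncomputable def psi {K : Type*} [CommGroup K] [Fintype K] (β : K →* ℂˣ) :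
    MonoidAlgebra ℂ K →ₗ[ℂ] MonoidAlgebra ℂ K :=
  (Finsupp.lift (MonoidAlgebra ℂ K) ℂ K fun g => ((β g : ℂˣ) : ℂ) • MonoidAlgebra.single g 1)
    ∘ₗ (MonoidAlgebra.coeffLinearEquiv ℂ).toLinearMap

/-- `R_H : ℂ[K] → ℂ[H*]`, the linear map with `R_H(e_g) = ∑_{α ∈ K*} α(g) e_{α|_H}`. -/
noncomputable def RH {K : Type*} [CommGroup K] [Fintype K] (H : Subgroup K) :
    MonoidAlgebra ℂ K →ₗ[ℂ] MonoidAlgebra ℂ (H →* ℂˣ) :=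
  (Finsupp.lift (MonoidAlgebra ℂ (H →* ℂˣ)) ℂ K fun g =>
    ∑ α : K →* ℂˣ, ((α g : ℂˣ) : ℂ) • MonoidAlgebra.single (α.comp H.subtype) 1)
    ∘ₗ (MonoidAlgebra.coeffLinearEquiv ℂ).toLinearMap

open MonoidAlgebra

section Characters

variable {K : Type*} [CommGroup K] [Finite K]

lemma exists_char_comp_subtype_eq_one_apply_ne_one (H : Subgroup K) {g : K} (hg : g ∉ H) :
    ∃ β : K →* ℂˣ, β.comp H.subtype = 1 ∧ β g ≠ 1 := by
  by_contra! h
  refine hg ((CommGroup.forall_monoidHom_apply_eq_one_iff ℂ H g).mp fun β hβ ↦ h β ?_)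
  ext y
  simp [hβ y y.2]

lemma sum_char_apply [DecidableEq K] (y : K) :
    ∑ α : K →* ℂˣ, ((α y : ℂˣ) : ℂ) = if y = 1 then (Fintype.card (K →* ℂˣ) : ℂ) else 0 := by
  split_ifs with hy
  · simp [hy]
  obtain ⟨β, hβ⟩ := CommGroup.exists_apply_ne_one_of_hasEnoughRootsOfUnity K ℂ hy
  refine sum_hom_units_eq_zero ((Units.coeHom ℂ).comp (MonoidHom.eval y)) fun h ↦ hβ ?_
  simpa using DFunLike.congr_fun h β

end Characters

section RestrictionMatrix

variable {K : Type*} [CommGroup K] [Fintype K] (H : Subgroup K)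

lemma RH_single (g : K) (c : ℂ) :
    RH H (single g c) = ∑ α : K →* ℂˣ, single (α.comp H.subtype) (c * α g) := by
  simp [RH, Finset.smul_sum, smul_single]

lemma RH_single_eq_zero {g : K} (hg : g ∉ H) (c : ℂ) : RH H (single g c) = 0 := by
  obtain ⟨β, hβH, hβg⟩ := exists_char_comp_subtype_eq_one_apply_ne_one H hg
  set S := RH H (single g c)
  have hS : ((β g : ℂˣ) : ℂ) • S = S := by
    calc ((β g : ℂˣ) : ℂ) • S
        = ∑ α : K →* ℂˣ, single ((β * α).comp H.subtype) (c * (β * α) g) := by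
          simp only [S, RH_single, Finset.smul_sum, smul_single, MonoidHom.mul_comp, hβH,
            one_mul, MonoidHom.mul_apply, Units.val_mul, smul_eq_mul]
          ring_nf
      _ = S := (Fintype.sum_equiv (Equiv.mulLeft β) _ _ fun _ ↦ rfl).trans (RH_single H g c).symm
  have hβg' : ((β g : ℂˣ) : ℂ) - 1 ≠ 0 := by simpa [sub_eq_zero] using hβg
  refine (smul_eq_zero.mp ?_).resolve_left hβg'
  rw [sub_smul, one_smul, hS, sub_self]

lemma lift_eval_inv_RH_eq_card_mul_coeff (h : H) (x : MonoidAlgebra ℂ K) :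
    lift ℂ ℂ (H →* ℂˣ) ((Units.coeHom ℂ).comp (MonoidHom.eval h⁻¹)) (RH H x) =
      Fintype.card (K →* ℂˣ) * x.coeff h := by
  classical
  induction x using induction_linear with
  | zero => simp
  | add x y hx hy => rw [map_add, map_add, hx, hy, coeff_add, Finsupp.add_apply, mul_add]
  | single g c =>
    calc lift ℂ ℂ (H →* ℂˣ) ((Units.coeHom ℂ).comp (MonoidHom.eval h⁻¹)) (RH H (single g c))
        = c * ∑ α : K →* ℂˣ, ((α (g * (h : K)⁻¹) : ℂˣ) : ℂ) := by
          simp [RH_single, lift_single, Finset.mul_sum, mul_assoc]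
      _ = Fintype.card (K →* ℂˣ) * (single g c).coeff h := by
          rw [sum_char_apply, coeff_single, Finsupp.single_apply]
          simp [mul_inv_eq_one, mul_comm]

end RestrictionMatrix

/-- the kernel of `R_H : ℂ[K] → ℂ[H*]` is the span of the `e_g`, `g ∈ K \ H`. -/
theorem stmt_5 (K : Type*) [CommGroup K] [Fintype K] (H : Subgroup K) :
    LinearMap.ker (RH H) =
      Submodule.span ℂ
        {x : MonoidAlgebra ℂ K | ∃ g ∉ H, x = MonoidAlgebra.single g (1 : ℂ)} := by
  refine le_antisymm (fun x hx ↦ ?_) (Submodule.span_le.mpr ?_)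
  · have hsupp : x ∈ supported ℂ ℂ (H : Set K)ᶜ := by
      refine mem_supported'.mpr fun g hg ↦ ?_
      have hg : g ∈ H := by simpa using hg
      have hcard : (Fintype.card (K →* ℂˣ) : ℂ) ≠ 0 := by exact_mod_cast Fintype.card_ne_zero
      have hinv := lift_eval_inv_RH_eq_card_mul_coeff H ⟨g, hg⟩ x
      rw [LinearMap.mem_ker.mp hx, map_zero] at hinv
      exact (mul_eq_zero.mp hinv.symm).resolve_left hcard
    rw [supported_eq_span_single] at hsupp
    exact Submodule.span_mono (by rintro _ ⟨g, hg, rfl⟩; exact ⟨g, hg, rfl⟩) hsupp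
  · rintro _ ⟨g, hg, rfl⟩
    exact RH_single_eq_zero H hg 1
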